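/- Let 1 ≥ p_1 ≥ ... ≥ p_D ≥ 0, fix d with 1 < d < D, and let ζ ≥ 0 satisfy p_d + ζ ≤ 1 and ζ ≤ p_{d+1}. Define p'_i = p_i for i ∉ {d, d+1}, p'_d = p_d + ζ, p'_{d+1} = p_{d+1} − ζ. Then Σ_{k=1}^D Π_{i=1}^k p'_i ≥ Σ_{k=1}^D Π_{i=1}^k p_i. -/

import Mathlib

/-!
In Horner form the expected length is `p₁ (1 + p₂ (1 + ⋯ (1 + p_D)))`. The transfer only changes
the factor `a (1 + b (1 + L))`, with `a = p_d`, `b = p_{d+1}` and `L` the expected length of the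
tail after `d + 1`, into `(a + ζ) (1 + (b - ζ) (1 + L))`; the difference is
`ζ (1 - (a + ζ - b) (1 + L)) ≥ ζ (1 - (1 - b) (1 + L))`. Since every tail probability lies in
`[0, b]`, Horner induction gives `(1 - b) (1 + L) ≤ 1`:
`(1 - b) (1 + x (1 + L')) ≤ (1 - b) + x ≤ 1`.
-/

open Finset

@[to_additive sum_Icc_one_eq_sum_range]
theorem prod_Icc_one_eq_prod_range {M : Type*} [CommMonoid M] (f : ℕ → M) (n : ℕ) :
    ∏ i ∈ Icc 1 n, f i = ∏ i ∈ range n, f (i + 1) := by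
  rw [range_eq_Ico, prod_Ico_add', zero_add, ← Ico_add_one_right_eq_Icc]

theorem antitoneOn_Icc_of_succ_le {α : Type*} [Preorder α] {f : ℕ → α} {a b : ℕ}
    (hf : ∀ n, a ≤ n → n < b → f (n + 1) ≤ f n) : AntitoneOn f (Set.Icc a b) := by
  rintro i ⟨hai, -⟩ j ⟨-, hjb⟩ hij
  induction j, hij using Nat.le_induction with
  | base => rfl
  | succ j hij ih => exact (hf j (hai.trans hij) hjb).trans (ih (by omega))

theorem mul_one_add_le_of_transfer {a b ζ L : ℝ} (hζ : 0 ≤ ζ) (ha : a + ζ ≤ 1) (hL : 0 ≤ 1 + L)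
    (hbL : (1 - b) * (1 + L) ≤ 1) :
    a * (1 + b * (1 + L)) ≤ (a + ζ) * (1 + (b - ζ) * (1 + L)) := by
  nlinarith [mul_le_mul_of_nonneg_right ha hL]

noncomputable def expectedLength (p : ℕ → ℝ) (n : ℕ) : ℝ :=
  ∑ k ∈ range n, ∏ i ∈ range (k + 1), p i

theorem sum_Icc_prod_Icc_eq_expectedLength (p : ℕ → ℝ) (n : ℕ) :
    ∑ k ∈ Icc 1 n, ∏ i ∈ Icc 1 k, p i = expectedLength (fun i => p (i + 1)) n := by
  simp only [expectedLength, sum_Icc_one_eq_sum_range, prod_Icc_one_eq_prod_range]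

theorem expectedLength_congr {p q : ℕ → ℝ} {n : ℕ} (h : ∀ i < n, p i = q i) :
    expectedLength p n = expectedLength q n :=
  sum_congr rfl fun k hk => prod_congr rfl fun i hi => h i (by simp only [mem_range] at hk hi; omega)

theorem expectedLength_nonneg {p : ℕ → ℝ} {n : ℕ} (h : ∀ i < n, 0 ≤ p i) :
    0 ≤ expectedLength p n :=
  sum_nonneg fun k hk => prod_nonneg fun i hi => h i (by simp only [mem_range] at hk hi; omega)

theorem expectedLength_add (p : ℕ → ℝ) (m n : ℕ) :
    expectedLength p (m + n) =
      expectedLength p m + (∏ i ∈ range m, p i) * expectedLength (fun i => p (m + i)) n := by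
  rw [expectedLength, sum_range_add, expectedLength, expectedLength, mul_sum]
  congr 1
  refine sum_congr rfl fun k _ => ?_
  rw [add_assoc, prod_range_add]

theorem expectedLength_succ (p : ℕ → ℝ) (n : ℕ) :
    expectedLength p (n + 1) = p 0 * (1 + expectedLength (fun i => p (i + 1)) n) := by
  simp only [expectedLength, sum_range_succ', prod_range_succ', mul_add, mul_sum]
  simp only [range_zero, prod_empty, mul_one, mul_comm, add_comm]

theorem one_sub_mul_one_add_expectedLength_le {x : ℕ → ℝ} {r : ℝ} (hr : 0 ≤ r) :
    ∀ {n : ℕ}, (∀ i < n, 0 ≤ x i ∧ x i ≤ r) → (1 - r) * (1 + expectedLength x n) ≤ 1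
  | 0, _ => by simpa [expectedLength] using hr
  | n + 1, hx => by
    have ih := one_sub_mul_one_add_expectedLength_le (x := fun i => x (i + 1)) (n := n) hr
      fun i hi => hx (i + 1) (by omega)
    obtain ⟨hx0, hxr⟩ := hx 0 n.succ_pos
    rw [expectedLength_succ]
    nlinarith [mul_le_mul_of_nonneg_left ih hx0]

theorem expectedLength_le_of_transfer {p q : ℕ → ℝ} {m n : ℕ} {ζ : ℝ}
    (hq_lt : ∀ i < m, q i = p i) (hq_m : q m = p m + ζ) (hq_succ : q (m + 1) = p (m + 1) - ζ)
    (hq_gt : ∀ i, m + 1 < i → q i = p i) (hp_lt : ∀ i < m, 0 ≤ p i) (hζ : 0 ≤ ζ)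
    (hζm : p m + ζ ≤ 1) (hp_succ : 0 ≤ p (m + 1))
    (hp_gt : ∀ i, m + 1 < i → i < m + (n + 2) → 0 ≤ p i ∧ p i ≤ p (m + 1)) :
    expectedLength p (m + (n + 2)) ≤ expectedLength q (m + (n + 2)) := by
  have hq_tail : (fun i => q (m + (i + 1 + 1))) = fun i => p (m + (i + 1 + 1)) :=
    funext fun i => hq_gt _ (by omega)
  have hp_tail (i : ℕ) (hi : i < n) :
      0 ≤ p (m + (i + 1 + 1)) ∧ p (m + (i + 1 + 1)) ≤ p (m + 1) :=
    hp_gt _ (by omega) (by omega)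
  rw [expectedLength_add p m, expectedLength_add q m, expectedLength_congr hq_lt,
    prod_congr rfl fun i hi => hq_lt i (mem_range.1 hi)]
  simp only [expectedLength_succ, add_zero, zero_add, hq_m, hq_succ, hq_tail]
  gcongr _ + _ * ?_
  · exact prod_nonneg fun i hi => hp_lt i (mem_range.1 hi)
  refine mul_one_add_le_of_transfer hζ hζm ?_
    (one_sub_mul_one_add_expectedLength_le hp_succ hp_tail)
  linarith [expectedLength_nonneg fun i hi => (hp_tail i hi).1]

theorem stmt2_general (D d : ℕ) (hd : 1 < d) (hdD : d < D) (p : ℕ → ℝ) (ζ : ℝ)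
    (hpD : 0 ≤ p D)
    (hmono : ∀ i, 1 ≤ i → i < D → p (i + 1) ≤ p i)
    (hζ : 0 ≤ ζ) (hζd : p d + ζ ≤ 1) :
    ∑ k ∈ Finset.Icc 1 D, ∏ i ∈ Finset.Icc 1 k, p i
      ≤ ∑ k ∈ Finset.Icc 1 D, ∏ i ∈ Finset.Icc 1 k,
          (if i = d then p d + ζ else if i = d + 1 then p (d + 1) - ζ else p i) := by
  have hanti : AntitoneOn p (Set.Icc 1 D) := antitoneOn_Icc_of_succ_le hmono
  have hp_nonneg (i : ℕ) (h1 : 1 ≤ i) (hD : i ≤ D) : 0 ≤ p i :=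
    hpD.trans (hanti ⟨h1, hD⟩ ⟨h1.trans hD, le_rfl⟩ hD)
  obtain ⟨m, rfl⟩ : ∃ m, d = m + 1 := ⟨d - 1, by omega⟩
  obtain ⟨n, rfl⟩ : ∃ n, D = m + (n + 2) := ⟨D - m - 2, by omega⟩
  rw [sum_Icc_prod_Icc_eq_expectedLength, sum_Icc_prod_Icc_eq_expectedLength]
  refine expectedLength_le_of_transfer (fun i hi => ?_) (by simp) (by simp) (fun i hi => ?_)
    (fun i hi => hp_nonneg _ (by omega) (by omega)) hζ hζd (hp_nonneg _ (by omega) (by omega))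
    fun i h1 h2 => ⟨hp_nonneg _ (by omega) (by omega),
      hanti ⟨by omega, by omega⟩ ⟨by omega, by omega⟩ (by omega)⟩
  all_goals simp only [if_neg (show i + 1 ≠ m + 1 by omega),
    if_neg (show i + 1 ≠ m + 1 + 1 by omega)]

/-- Concentrated case: transferring an amount `ζ` of acceptance probability from
position `d+1` to the adjacent earlier position `d` does not decrease the expected
accepted length `∑_{k=1}^D ∏_{i=1}^k p i`. -/
theorem stmt2 (D d : ℕ) (hd : 1 < d) (hdD : d < D) (p : ℕ → ℝ) (ζ : ℝ)
    (hp1 : p 1 ≤ 1) (hpD : 0 ≤ p D)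
    (hmono : ∀ i, 1 ≤ i → i < D → p (i + 1) ≤ p i)
    (hζ : 0 ≤ ζ) (hζd : p d + ζ ≤ 1) (hζd1 : ζ ≤ p (d + 1)) :
    ∑ k ∈ Finset.Icc 1 D, ∏ i ∈ Finset.Icc 1 k, p i
      ≤ ∑ k ∈ Finset.Icc 1 D, ∏ i ∈ Finset.Icc 1 k,
          (if i = d then p d + ζ else if i = d + 1 then p (d + 1) - ζ else p i) :=
  stmt2_general D d hd hdD p ζ hpD hmono hζ hζd
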